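/- With the setup above, Q|Φ⟩ = [(1−e^{iφ₁})(1 − g + g e^{iφ₂}) − e^{iφ₂}]|Φ_g⟩ + [g(1−e^{iφ₁})(e^{iφ₂}−1) − e^{iφ₁}]|Φ_b⟩, where |Φ⟩ = |Φ_g⟩ + |Φ_b⟩. -/

import Mathlib

/-- The rank-one orthogonal projection `|v⟩⟨v|`. -/
noncomputable def ketBra {H : Type*} [NormedAddCommGroup H] [InnerProductSpace ℂ H]
    (v : H) : H →L[ℂ] H :=
  (innerSL ℂ v).smulRight v

/-- `P₀^φ = I − (1 − e^{iφ})|0⟩⟨0|`. -/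
noncomputable def condPhase0 {H : Type*} [NormedAddCommGroup H] [InnerProductSpace ℂ H]
    (v : H) (φ : ℝ) : H →L[ℂ] H :=
  1 - (1 - Complex.exp (φ * Complex.I)) • ketBra v

/-- `P_χ^φ = I − (1 − e^{iφ})P`. -/
noncomputable def condPhaseProj {H : Type*} [NormedAddCommGroup H] [InnerProductSpace ℂ H]
    (P : H →L[ℂ] H) (φ : ℝ) : H →L[ℂ] H :=
  1 - (1 - Complex.exp (φ * Complex.I)) • P

/-! Conjugating by the unitary `U` turns the phase about `|0⟩` into the phase about `Φ = U|0⟩`, so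
`Q Φ = -(I - (1 - e^{iφ₁})|Φ⟩⟨Φ|)(Φ - (1 - e^{iφ₂}) PΦ)`. This is a combination of `Φ` and `PΦ`
whose coefficients involve only `⟪Φ, Φ⟫ = 1` and `⟪Φ, PΦ⟫ = ‖PΦ‖² = g`. -/

open ContinuousLinearMap InnerProductSpace Complex

section
variable {H : Type*} [NormedAddCommGroup H] [InnerProductSpace ℂ H]

theorem ketBra_eq_rankOne (v : H) : ketBra v = rankOne ℂ v v := rfl

theorem condPhase0_apply (v : H) (φ : ℝ) (x : H) :
    condPhase0 v φ x = x - ((1 - exp (φ * I)) * inner ℂ v x) • v := by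
  simp [condPhase0, ketBra_eq_rankOne, smul_smul]

theorem condPhaseProj_apply (P : H →L[ℂ] H) (φ : ℝ) (x : H) :
    condPhaseProj P φ x = x - (1 - exp (φ * I)) • P x := rfl

theorem condPhase0_condPhaseProj_apply_self {Φ : H} (hΦ : ‖Φ‖ = 1) (P : H →L[ℂ] H)
    (φ₁ φ₂ : ℝ) {g : ℂ} (hg : inner ℂ Φ (P Φ) = g) :
    condPhase0 Φ φ₁ (condPhaseProj P φ₂ Φ) =
      -(((1 - exp (φ₁ * I)) * (1 - g + g * exp (φ₂ * I)) - exp (φ₂ * I)) • P Φ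
      + (g * (1 - exp (φ₁ * I)) * (exp (φ₂ * I) - 1) - exp (φ₁ * I)) • (Φ - P Φ)) := by
  have hΦΦ : inner ℂ Φ Φ = 1 := by simp [inner_self_eq_norm_sq_to_K, hΦ]
  rw [condPhase0_apply, condPhaseProj_apply, inner_sub_right, inner_smul_right, hΦΦ, hg]
  match_scalars <;> ring

variable [CompleteSpace H]

theorem inner_map_self_eq_norm_map_sq_of_idempotent {P : H →L[ℂ] H} (hP2 : P ∘L P = P)
    (hPa : adjoint P = P) (x : H) : inner ℂ x (P x) = (‖P x‖ ^ 2 : ℝ) :=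
  calc inner ℂ x (P x) = inner ℂ x (adjoint P (P x)) := by rw [hPa, ← comp_apply, hP2]
    _ = inner ℂ (P x) (P x) := adjoint_inner_right P x (P x)
    _ = (‖P x‖ ^ 2 : ℝ) := by rw [inner_self_eq_norm_sq_to_K]; norm_cast

theorem comp_condPhase0_comp_adjoint {U : H →L[ℂ] H} (hU : U ∘L adjoint U = 1) (v : H)
    (φ : ℝ) : U ∘L condPhase0 v φ ∘L adjoint U = condPhase0 (U v) φ := by
  rw [condPhase0, condPhase0, sub_comp, comp_sub, one_def, id_comp, ← one_def, hU, smul_comp,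
    comp_smul, ketBra_eq_rankOne, ketBra_eq_rankOne, rankOne_comp, adjoint_adjoint, comp_rankOne]

end

open ContinuousLinearMap in
/-- Action of the amplitude amplification operator `Q` on `|Φ⟩ = |Φ_g⟩ + |Φ_b⟩`:
`Q|Φ⟩ = [(1−e^{iφ₁})(1 − g + g e^{iφ₂}) − e^{iφ₂}]|Φ_g⟩
       + [g(1−e^{iφ₁})(e^{iφ₂}−1) − e^{iφ₁}]|Φ_b⟩`. -/
theorem Q_action_on_Phi
    {H : Type*} [NormedAddCommGroup H] [InnerProductSpace ℂ H] [FiniteDimensional ℂ H]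
    (U : H →L[ℂ] H)
    (hU1 : ContinuousLinearMap.adjoint U ∘L U = 1)
    (hU2 : U ∘L ContinuousLinearMap.adjoint U = 1)
    (v : H) (hv : ‖v‖ = 1)
    (P : H →L[ℂ] H) (hP2 : P ∘L P = P) (hPa : ContinuousLinearMap.adjoint P = P)
    (φ₁ φ₂ : ℝ)
    (Q : H →L[ℂ] H)
    (hQ : Q = -(U ∘L condPhase0 v φ₁ ∘L ContinuousLinearMap.adjoint U ∘L condPhaseProj P φ₂))
    (Φ Φg Φb : H) (hΦ : Φ = U v) (hΦg : Φg = P Φ) (hΦb : Φb = Φ - Φg)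
    (g : ℂ) (hg : g = (‖Φg‖ ^ 2 : ℝ)) :
    Q Φ = ((1 - Complex.exp (φ₁ * Complex.I)) * (1 - g + g * Complex.exp (φ₂ * Complex.I))
            - Complex.exp (φ₂ * Complex.I)) • Φg
      + (g * (1 - Complex.exp (φ₁ * Complex.I)) * (Complex.exp (φ₂ * Complex.I) - 1)
            - Complex.exp (φ₁ * Complex.I)) • Φb := by
  subst hg hΦb hΦg
  have hU : U ∈ unitary (H →L[ℂ] H) := Unitary.mem_iff.mpr ⟨hU1, hU2⟩
  have hΦ1 : ‖Φ‖ = 1 := by rw [hΦ, norm_map_of_mem_unitary hU, hv]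
  have hQΦ : Q Φ = -condPhase0 Φ φ₁ (condPhaseProj P φ₂ Φ) := by
    rw [hQ, hΦ, ← comp_condPhase0_comp_adjoint hU2]
    rfl
  rw [hQΦ, condPhase0_condPhaseProj_apply_self hΦ1 P φ₁ φ₂
    (inner_map_self_eq_norm_map_sq_of_idempotent hP2 hPa Φ), neg_neg]
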